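/- arXiv:1902.09573 — 3 statements merged into one kernel-verified Lean document; each statement's English description precedes it below -/
import Mathlib

section
/- With d defined as d(x,y) = inf over r ≥ 0 and r-neighborhood isomorphisms φ of max{1/(r+1), d₀(φ)}, the infimum is attained at r₀ = ⌈1/d(x,y)⌉ − 1 whenever x ≠ y. -/
open MeasureTheory

/-- The ball of graph radius `r` around `x` in the graph `G` (as a vertex set,
including `x` itself). -/
def gball {I : Type*} (G : I → I → Prop) (x : I) : ℕ → Set I
  | 0 => {x}
  | r + 1 => gball G x r ∪ {z | ∃ w ∈ gball G x r, G w z}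

/-- An `r`-neighborhood isomorphism between `x` and `y`: a rooted isomorphism of the
graph balls `B(x,r) → B(y,r)` sending `x` to `y` (encoded as a global map that is a
bijection between the balls preserving adjacency in both directions). -/
def IsNbhdIso {I : Type*} (G : I → I → Prop) (r : ℕ) (x y : I) (φ : I → I) : Prop :=
  φ x = y ∧ Set.BijOn φ (gball G x r) (gball G y r) ∧
    ∀ u ∈ gball G x r, ∀ v ∈ gball G x r, (G u v ↔ G (φ u) (φ v))

/-- The displacement `d₀(φ) = sup_{z ∈ B(x,r)} d₀(z, φ(z))` of a neighborhood map. -/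
noncomputable def disp {I : Type*} [MetricSpace I] (G : I → I → Prop) (x : I) (r : ℕ)
    (φ : I → I) : ℝ :=
  ⨆ z : gball G x r, dist (z : I) (φ z)

/-- The neighborhood-isomorphism metric
`d(x,y) = inf over r and r-neighborhood isomorphisms φ of max {1/(r+1), d₀(φ)}`. -/
noncomputable def nbhdDist {I : Type*} [MetricSpace I] (G : I → I → Prop) (x y : I) : ℝ :=
  sInf {m | ∃ (r : ℕ) (φ : I → I), IsNbhdIso G r x y φ ∧
    m = max (1 / ((r : ℝ) + 1)) (disp G x r φ)}

/-- `degIn G B x` is the number of neighbors of `x` in `B`. -/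
noncomputable def degIn {I : Type*} (G : I → I → Prop) (B : Set I) (x : I) : ℕ :=
  {y | y ∈ B ∧ G x y}.ncard

/-- The vertex set of the connected component of `x`. -/
def compSet {I : Type*} (G : I → I → Prop) (x : I) : Set I := {y | Relation.ReflTransGen G x y}

section Aux
variable {I : Type*} [MetricSpace I] {G : I → I → Prop} {x y : I}

lemma mem_gball_self (G : I → I → Prop) (x : I) (r : ℕ) : x ∈ gball G x r := by
  induction r with
  | zero => exact rfl
  | succ r ih => exact Or.inl ih

lemma gball_mono {s t : ℕ} (h : s ≤ t) : gball G x s ⊆ gball G x t := by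
  induction t with
  | zero => simpa [Nat.le_zero.mp h]
  | succ t ih =>
    rcases Nat.lt_or_ge s (t+1) with h' | h'
    · exact (ih (Nat.lt_succ_iff.mp h')).trans (fun z hz => Or.inl hz)
    · have : s = t + 1 := le_antisymm h h'
      simp [this]

lemma gball_finite (hfin : ∀ x : I, {y | G x y}.Finite) (r : ℕ) :
    (gball G x r).Finite := by
  induction r with
  | zero => exact Set.finite_singleton x
  | succ r ih =>
    refine ih.union ?_
    have : {z | ∃ w ∈ gball G x r, G w z} = ⋃ w ∈ gball G x r, {z | G w z} := by
      ext z; simp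
    rw [this]
    exact ih.biUnion (fun w _ => hfin w)

lemma image_gball {r : ℕ} {φ : I → I} (h : IsNbhdIso G r x y φ) :
    ∀ s, s ≤ r → φ '' gball G x s = gball G y s := by
  intro s
  induction s with
  | zero => intro _; simp [gball, h.1]
  | succ s ih =>
    intro hsr
    have hsr' : s ≤ r := (Nat.le_succ s).trans hsr
    have ihs := ih hsr'
    apply Set.Subset.antisymm
    · rintro v ⟨u, hu, rfl⟩
      rcases hu with hu | ⟨w, hw, hwu⟩
      · exact Or.inl (ihs ▸ ⟨u, hu, rfl⟩)
      · refine Or.inr ⟨φ w, ihs ▸ ⟨w, hw, rfl⟩, ?_⟩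
        have hwr : w ∈ gball G x r := gball_mono hsr' hw
        have hur : u ∈ gball G x r := gball_mono hsr (Or.inr ⟨w, hw, hwu⟩)
        exact (h.2.2 w hwr u hur).mp hwu
    · intro v hv
      rcases hv with hv | ⟨w, hw, hwv⟩
      · obtain ⟨u, hu, rfl⟩ := ihs ▸ hv
        exact ⟨u, Or.inl hu, rfl⟩
      · obtain ⟨u, hu, rfl⟩ := ihs ▸ hw
        have hvr : v ∈ gball G y r := gball_mono hsr (Or.inr ⟨φ u, ihs ▸ ⟨u, hu, rfl⟩, hwv⟩)
        obtain ⟨t, ht, rfl⟩ := h.2.1.2.2 hvr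
        have hur : u ∈ gball G x r := gball_mono hsr' hu
        have : G u t := (h.2.2 u hur t ht).mpr hwv
        exact ⟨t, Or.inr ⟨u, hu, this⟩, rfl⟩

lemma IsNbhdIso.restrict {r s : ℕ} {φ : I → I} (h : IsNbhdIso G r x y φ) (hsr : s ≤ r) :
    IsNbhdIso G s x y φ := by
  refine ⟨h.1, ?_, fun u hu v hv => h.2.2 u (gball_mono hsr hu) v (gball_mono hsr hv)⟩
  have := (h.2.1.2.1.mono (gball_mono hsr)).bijOn_image
  rwa [image_gball h s hsr] at this

lemma disp_bddAbove (hdiam : ∀ x y : I, dist x y ≤ 1) (r : ℕ) (φ : I → I) :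
    BddAbove (Set.range fun z : gball G x r => dist (z : I) (φ z)) := by
  refine ⟨1, ?_⟩
  rintro _ ⟨z, rfl⟩
  exact hdiam _ _

lemma disp_mono (hdiam : ∀ x y : I, dist x y ≤ 1) {r s : ℕ} (hsr : s ≤ r) (φ : I → I) :
    disp G x s φ ≤ disp G x r φ := by
  haveI : Nonempty (gball G x s) := ⟨⟨x, mem_gball_self G x s⟩⟩
  exact ciSup_le fun z =>
    le_ciSup (disp_bddAbove hdiam r φ) (⟨z, gball_mono hsr z.2⟩ : gball G x r)

lemma dist_le_disp (hdiam : ∀ x y : I, dist x y ≤ 1) {r : ℕ} {φ : I → I} (h : φ x = y) :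
    dist x y ≤ disp G x r φ := by
  have := le_ciSup (disp_bddAbove (G := G) hdiam r φ) (⟨x, mem_gball_self G x r⟩ : gball G x r)
  rwa [h] at this

lemma disp_le_one (hdiam : ∀ x y : I, dist x y ≤ 1) (r : ℕ) (φ : I → I) :
    disp G x r φ ≤ 1 := by
  haveI : Nonempty (gball G x r) := ⟨⟨x, mem_gball_self G x r⟩⟩
  exact ciSup_le fun z => hdiam _ _

lemma disp_attained (hfin : ∀ x : I, {y | G x y}.Finite) (hdiam : ∀ x y : I, dist x y ≤ 1)
    (r : ℕ) (φ : I → I) :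
    ∃ z ∈ gball G x r, disp G x r φ = dist z (φ z) := by
  haveI : Nonempty (gball G x r) := ⟨⟨x, mem_gball_self G x r⟩⟩
  haveI : Finite (gball G x r) := (gball_finite hfin r).to_subtype
  obtain ⟨z₀, hz₀⟩ := Finite.exists_max (fun z : gball G x r => dist (z : I) (φ z))
  refine ⟨z₀, z₀.2, le_antisymm (ciSup_le hz₀) (le_ciSup (disp_bddAbove hdiam r φ) z₀)⟩

end Aux

/-- the infimum in the definition of `nbhdDist` is attained at
`r₀ = ⌈1 / d(x,y)⌉ - 1` whenever `x ≠ y`. -/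
theorem stmt1 {I : Type*} [MetricSpace I] (hdiam : ∀ x y : I, dist x y ≤ 1)
    (G : I → I → Prop) (hsym : Symmetric G) (hirr : Irreflexive G)
    (D : ℕ) (hfin : ∀ x : I, {y | G x y}.Finite) (hdeg : ∀ x : I, {y | G x y}.ncard ≤ D)
    (x y : I) (hxy : x ≠ y) :
    ∃ φ : I → I, IsNbhdIso G (⌈1 / nbhdDist G x y⌉₊ - 1) x y φ ∧
      nbhdDist G x y =
        max (1 / (((⌈1 / nbhdDist G x y⌉₊ - 1 : ℕ) : ℝ) + 1))
          (disp G x (⌈1 / nbhdDist G x y⌉₊ - 1) φ) := by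
  set S := {m | ∃ (r : ℕ) (φ : I → I), IsNbhdIso G r x y φ ∧
    m = max (1 / ((r : ℝ) + 1)) (disp G x r φ)} with hSdef
  have hδdef : nbhdDist G x y = sInf S := rfl
  have hdxy : 0 < dist x y := dist_pos.2 hxy
  have hlb : ∀ m ∈ S, dist x y ≤ m := by
    rintro m ⟨r, φ, hiso, rfl⟩
    exact le_max_of_le_right (dist_le_disp hdiam hiso.1)
  have hbdd : BddBelow S := ⟨dist x y, hlb⟩
  have hiso0 : IsNbhdIso G 0 x y (fun _ => y) := by
    refine ⟨rfl, ⟨?_, ?_, ?_⟩, ?_⟩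
    · intro u hu; exact rfl
    · intro u hu v hv _; rw [hu, hv]
    · intro v hv; exact ⟨x, rfl, hv.symm⟩
    · intro u hu v hv
      have hu' : u = x := hu
      have hv' : v = x := hv
      rw [hu', hv']
      exact iff_of_false (hirr x) (hirr y)
  have hSne : S.Nonempty :=
    ⟨max (1 / ((0 : ℝ) + 1)) (disp G x 0 (fun _ => y)), 0, fun _ => y, hiso0, by norm_num⟩
  have hδpos : 0 < nbhdDist G x y := lt_of_lt_of_le hdxy (le_csInf hSne hlb)
  set δ := nbhdDist G x y with hδ
  set r₀ : ℕ := ⌈1 / δ⌉₊ - 1 with hr₀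
  have hceil : 1 ≤ ⌈1 / δ⌉₊ := Nat.one_le_ceil_iff.2 (by positivity)
  have hr₀cast : (r₀ : ℝ) + 1 = (⌈1 / δ⌉₊ : ℕ) := by
    rw [hr₀, Nat.cast_sub hceil]; push_cast; ring
  have hcle : 1 / ((r₀ : ℝ) + 1) ≤ δ := by
    rw [hr₀cast, div_le_iff₀ (by exact_mod_cast hceil)]
    calc (1 : ℝ) = δ * (1 / δ) := by field_simp
    _ ≤ δ * (⌈1 / δ⌉₊ : ℝ) := mul_le_mul_of_nonneg_left (Nat.le_ceil _) hδpos.le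
  have hr₀lt : (r₀ : ℝ) < 1 / δ := by
    have := Nat.ceil_lt_add_one (a := 1 / δ) (by positivity)
    have h' : ((r₀ : ℝ)) = (⌈1 / δ⌉₊ : ℝ) - 1 := by
      rw [hr₀, Nat.cast_sub hceil]; push_cast; ring
    linarith
  set c := 1 / ((r₀ : ℝ) + 1) with hc
  set V := {m | ∃ φ : I → I, IsNbhdIso G r₀ x y φ ∧ m = max c (disp G x r₀ φ)} with hVdef
  have hVS : V ⊆ S := by rintro m ⟨φ, hiso, rfl⟩; exact ⟨r₀, φ, hiso, rfl⟩
  -- Lemma A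
  have lemA : ∀ m ∈ S, (r₀ : ℝ) * m < 1 → ∃ m' ∈ V, m' ≤ m := by
    rintro m ⟨r, φ, hiso, rfl⟩ hrm
    have hr : r₀ ≤ r := by
      by_contra h
      push_neg at h
      have h1 : (r : ℝ) + 1 ≤ (r₀ : ℝ) := by exact_mod_cast h
      have hpos : (0 : ℝ) < (r : ℝ) + 1 := by positivity
      have h2 : (1 : ℝ) ≤ (r₀ : ℝ) * (1 / ((r : ℝ) + 1)) := by
        rw [mul_one_div, le_div_iff₀ hpos]
        linarith
      have h3 : (r₀ : ℝ) * (1 / ((r : ℝ) + 1)) ≤ (r₀ : ℝ) * max (1 / ((r : ℝ) + 1)) (disp G x r φ) :=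
        mul_le_mul_of_nonneg_left (le_max_left _ _) (by positivity)
      linarith
    refine ⟨max c (disp G x r₀ φ), ⟨φ, hiso.restrict hr, rfl⟩, ?_⟩
    have h1 : c ≤ max (1 / ((r : ℝ) + 1)) (disp G x r φ) :=
      hcle.trans (csInf_le hbdd ⟨r, φ, hiso, rfl⟩)
    have h2 : disp G x r₀ φ ≤ max (1 / ((r : ℝ) + 1)) (disp G x r φ) :=
      (disp_mono hdiam hr φ).trans (le_max_right _ _)
    exact max_le h1 h2
  -- V is finite
  have hVfin : V.Finite := by
    have hBx : (gball G x r₀).Finite := gball_finite hfin r₀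
    have hBy : (gball G y r₀).Finite := gball_finite hfin r₀
    refine Set.Finite.subset (((hBx.prod hBy).image (fun p : I × I => dist p.1 p.2)).image
      (fun a => max c a)) ?_
    rintro m ⟨φ, hiso, rfl⟩
    obtain ⟨z, hz, hdz⟩ := disp_attained hfin hdiam r₀ φ
    exact ⟨dist z (φ z), ⟨(z, φ z), ⟨hz, hiso.2.1.1 hz⟩, rfl⟩, by rw [hdz]⟩
  -- there is m ∈ S with r₀ * m < 1, hence V nonempty
  have hexm : ∀ b : ℝ, δ < b → ∃ m ∈ S, m < b ∧ (r₀ : ℝ) * m < 1 := by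
    intro b hb
    rcases Nat.eq_zero_or_pos r₀ with h0 | hpos
    · obtain ⟨m, hmS, hm⟩ := exists_lt_of_csInf_lt hSne (hδdef ▸ hb)
      exact ⟨m, hmS, hm, by rw [h0]; norm_num⟩
    · have hr₀pos : (0 : ℝ) < (r₀ : ℝ) := by exact_mod_cast hpos
      have hδlt : δ < 1 / (r₀ : ℝ) := by
        rw [lt_div_iff₀ hr₀pos]
        rw [lt_div_iff₀ hδpos] at hr₀lt
        linarith
      obtain ⟨m, hmS, hm⟩ := exists_lt_of_csInf_lt hSne
        (show sInf S < min b (1 / (r₀ : ℝ)) from hδdef ▸ lt_min hb hδlt)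
      refine ⟨m, hmS, (hm.trans_le (min_le_left _ _)), ?_⟩
      have := hm.trans_le (min_le_right _ _)
      rw [lt_div_iff₀ hr₀pos] at this
      linarith
  have hVne : V.Nonempty := by
    obtain ⟨m, hmS, _, hm1⟩ := hexm (δ + 1) (by linarith)
    obtain ⟨m', hm'V, _⟩ := lemA m hmS hm1
    exact ⟨m', hm'V⟩
  -- the minimum of V
  obtain ⟨μ, hμV, hμle⟩ : ∃ μ ∈ V, ∀ m ∈ V, μ ≤ m := by
    obtain ⟨μ, hμ, hle⟩ := hVfin.toFinset.exists_min_image id (by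
      rwa [← Set.Finite.toFinset_nonempty hVfin] at hVne)
    exact ⟨μ, hVfin.mem_toFinset.mp hμ, fun m hm => hle m (hVfin.mem_toFinset.mpr hm)⟩
  have hδμ : δ ≤ μ := hδdef ▸ csInf_le hbdd (hVS hμV)
  have hμδ : μ ≤ δ := by
    by_contra h
    push_neg at h
    obtain ⟨m, hmS, hmμ, hm1⟩ := hexm μ h
    obtain ⟨m', hm'V, hm'm⟩ := lemA m hmS hm1
    exact absurd (hμle m' hm'V) (by linarith)
  have : μ = δ := le_antisymm hμδ hδμ
  obtain ⟨φ, hiso, heq⟩ := hμV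
  exact ⟨φ, hiso, by rw [← this, heq]⟩
end

section
/- Every Borel graph on a standard Borel space with all degrees at most D admits a Borel proper vertex coloring with D+1 colors (Kechris–Solecki–Todorcevic). -/
open MeasureTheory

/-!
First, the neighborhood `{x | ∃ y ∈ B, G x y}` of a Borel set `B` is Borel: it is the
projection of a Borel subset of `I × I` whose sections have at most `D` points. After embedding
the second factor into `ℝ`, the points with a section of maximal size are the injective
projection of the Borel set of increasing enumerations of their sections (Lusin–Souslin), and
induction on the bound handles the rest.

Next, using a countable family of Borel sets separating points from finite sets, every point `x`
lies in one of them, `U n`, that contains no neighbor of `x`; the least such `n` is a Borel proper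
coloring with countably many colors. Finally, recoloring greedily level by level, each point
takes the least color not used by its neighbors on lower levels, which is at most `D`, and
measurability propagates through the levels by the first step.
-/

open Set

theorem Set.Finite.exists_strictMono_fin_range_eq {α : Type*} [LinearOrder α] {s : Set α}
    (hs : s.Finite) {k : ℕ} (hk : s.ncard = k) : ∃ v : Fin k → α, StrictMono v ∧ range v = s :=
  ⟨hs.toFinset.orderEmbOfFin (by rw [← hk, ncard_eq_toFinset_card s hs]),
    OrderEmbedding.strictMono _, by simp⟩

theorem measurableSet_setOf_strictMono {X : Type*} [MeasurableSpace X] (n : ℕ) :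
    MeasurableSet {p : X × (Fin n → ℝ) | StrictMono p.2} := by
  have : {p : X × (Fin n → ℝ) | StrictMono p.2} =
      ⋂ (i : Fin n) (j : Fin n) (_ : i < j), {p | p.2 i < p.2 j} := by
    ext; simp [StrictMono]
  rw [this]
  exact .iInter fun i => .iInter fun j => .iInter fun _ =>
    measurableSet_lt measurable_snd.eval measurable_snd.eval

theorem measurableSet_setOf_ncard_eq_of_ncard_le_real {X : Type*} [MeasurableSpace X]
    [StandardBorelSpace X] (N : ℕ) {S : Set (X × ℝ)} (hS : MeasurableSet S)
    (hfin : ∀ x, (Prod.mk x ⁻¹' S).Finite) (hN : ∀ x, (Prod.mk x ⁻¹' S).ncard ≤ N) :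
    MeasurableSet {x | (Prod.mk x ⁻¹' S).ncard = N} := by
  set P : Set (X × (Fin N → ℝ)) := {p | StrictMono p.2 ∧ ∀ i, (p.1, p.2 i) ∈ S}
  have hP : MeasurableSet P := by
    rw [show P = {p | StrictMono p.2} ∩ ⋂ i, (fun p => (p.1, p.2 i)) ⁻¹' S by ext; simp [P]]
    exact (measurableSet_setOf_strictMono _).inter <|
      .iInter fun i => hS.preimage (measurable_fst.prodMk measurable_snd.eval)
  have ncard_range : ∀ p ∈ P, (range p.2).ncard = N := fun p hp => by
    rw [ncard_range_of_injective hp.1.injective, Nat.card_eq_fintype_card, Fintype.card_fin]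
  have range_eq : ∀ p ∈ P, range p.2 = Prod.mk p.1 ⁻¹' S := fun p hp =>
    eq_of_subset_of_ncard_le (range_subset_iff.2 hp.2) ((hN p.1).trans (ncard_range p hp).ge)
      (hfin p.1)
  have hinj : InjOn Prod.fst P := fun p hp q hq hpq => Prod.ext hpq <|
    (hp.1.range_inj hq.1).1 (by rw [range_eq p hp, range_eq q hq, hpq])
  have himage : {x | (Prod.mk x ⁻¹' S).ncard = N} = Prod.fst '' P := by
    ext x
    refine ⟨fun hx => ?_, ?_⟩
    · obtain ⟨v, hv, hrange⟩ := (hfin x).exists_strictMono_fin_range_eq hx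
      exact ⟨(x, v), ⟨hv, fun i => hrange.subset (mem_range_self i)⟩, rfl⟩
    · rintro ⟨p, hp, rfl⟩
      rw [mem_ofPred_eq, ← range_eq p hp, ncard_range p hp]
  rw [himage]
  exact hP.image_of_measurable_injOn measurable_fst hinj

theorem measurableSet_image_fst_of_ncard_le_real {X : Type*} [MeasurableSpace X]
    [StandardBorelSpace X] (N : ℕ) {S : Set (X × ℝ)} (hS : MeasurableSet S)
    (hfin : ∀ x, (Prod.mk x ⁻¹' S).Finite) (hN : ∀ x, (Prod.mk x ⁻¹' S).ncard ≤ N) :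
    MeasurableSet (Prod.fst '' S) := by
  induction N generalizing S with
  | zero =>
    convert MeasurableSet.empty
    refine eq_empty_of_forall_notMem fun x ⟨p, hp, hpx⟩ => ?_
    have : Prod.mk x ⁻¹' S = ∅ := (ncard_eq_zero (hfin x)).1 (Nat.le_zero.1 (hN x))
    exact this.subset (show p.2 ∈ Prod.mk x ⁻¹' S by rwa [← hpx])
  | succ N ih =>
    set F := {x | (Prod.mk x ⁻¹' S).ncard = N + 1}
    have hF : MeasurableSet F := measurableSet_setOf_ncard_eq_of_ncard_le_real _ hS hfin hN
    set S' := S ∩ Fᶜ ×ˢ univ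
    have hS' : MeasurableSet (Prod.fst '' S') := by
      refine ih (hS.inter (hF.compl.prod .univ)) (fun x => (hfin x).subset fun t ht => ht.1)
        fun x => ?_
      by_cases hx : x ∈ F
      · simp [S', hx]
      have hsec : Prod.mk x ⁻¹' S' = Prod.mk x ⁻¹' S := by ext; simp [S', hx]
      rw [hsec]
      exact Nat.le_of_lt_succ <| (hN x).lt_of_ne hx
    convert hF.union hS'
    refine Subset.antisymm (fun x hx => ?_)
      (union_subset (fun x hx => ?_) (image_mono inter_subset_left))
    · by_cases hxF : x ∈ F
      · exact Or.inl hxF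
      · obtain ⟨p, hp, rfl⟩ := hx
        exact Or.inr ⟨p, ⟨hp, hxF, trivial⟩, rfl⟩
    · obtain ⟨t, ht⟩ := nonempty_of_ncard_ne_zero (s := Prod.mk x ⁻¹' S) (by rw [hx]; omega)
      exact ⟨(x, t), ht, rfl⟩

theorem measurableSet_image_fst_of_ncard_le {X Y : Type*} [MeasurableSpace X]
    [StandardBorelSpace X] [MeasurableSpace Y] [StandardBorelSpace Y] (N : ℕ)
    {S : Set (X × Y)} (hS : MeasurableSet S)
    (hfin : ∀ x, (Prod.mk x ⁻¹' S).Finite) (hN : ∀ x, (Prod.mk x ⁻¹' S).ncard ≤ N) :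
    MeasurableSet (Prod.fst '' S) := by
  obtain ⟨e, he⟩ := exists_measurableEmbedding_real Y
  have hsec : ∀ x, Prod.mk x ⁻¹' (Prod.map id e '' S) = e '' (Prod.mk x ⁻¹' S) := by
    intro x; ext; simp [eq_comm]
  have := measurableSet_image_fst_of_ncard_le_real N
    ((MeasurableEmbedding.id.prodMap he).measurableSet_image' hS)
    (fun x => hsec x ▸ (hfin x).image e)
    (fun x => hsec x ▸ (ncard_image_of_injective _ he.injective).trans_le (hN x))
  rwa [← image_comp] at this

section StandardBorel

variable {I : Type*} [MeasurableSpace I] [StandardBorelSpace I] {G : I → I → Prop}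

theorem measurableSet_setOf_exists_adj {D : ℕ} (hG : MeasurableSet {p : I × I | G p.1 p.2})
    (hfin : ∀ x, {y | G x y}.Finite) (hdeg : ∀ x, {y | G x y}.ncard ≤ D) {B : Set I}
    (hB : MeasurableSet B) : MeasurableSet {x | ∃ y ∈ B, G x y} := by
  have hsub : ∀ x, Prod.mk x ⁻¹' ({p : I × I | G p.1 p.2} ∩ univ ×ˢ B) ⊆ {y | G x y} :=
    fun x y hy => hy.1
  convert measurableSet_image_fst_of_ncard_le D (hG.inter (MeasurableSet.univ.prod hB))
    (fun x => (hfin x).subset (hsub x))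
    (fun x => (ncard_le_ncard (hsub x) (hfin x)).trans (hdeg x)) using 1
  ext x; simp [and_comm]

theorem exists_measurableSet_nat_separating_finite :
    ∃ U : ℕ → Set I, (∀ n, MeasurableSet (U n)) ∧
      ∀ x (F : Set I), F.Finite → x ∉ F → ∃ n, x ∈ U n ∧ Disjoint (U n) F := by
  obtain ⟨e, he⟩ := exists_measurableEmbedding_real I
  obtain ⟨q, hq⟩ := exists_surjective_nat (ℚ × ℚ)
  refine ⟨fun n => e ⁻¹' Ioo ((q n).1 : ℝ) (q n).2,
    fun n => he.measurable measurableSet_Ioo, fun x F hF hx => ?_⟩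
  have hopen : IsOpen (e '' F)ᶜ := (hF.image e).isClosed.isOpen_compl
  have hxF : e x ∈ (e '' F)ᶜ := fun ⟨y, hy, hyx⟩ => hx (he.injective hyx ▸ hy)
  obtain ⟨_, hmem, hex, hsub⟩ :=
    Real.isTopologicalBasis_Ioo_rat.exists_subset_of_mem_open hxF hopen
  simp only [mem_iUnion, mem_singleton_iff] at hmem
  obtain ⟨a, b, -, rfl⟩ := hmem
  obtain ⟨n, hn⟩ := hq (a, b)
  refine ⟨n, by rwa [mem_preimage, hn], ?_⟩
  rw [disjoint_iff_forall_ne]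
  rintro y hy z hz rfl
  exact hsub (by rwa [mem_preimage, hn] at hy) ⟨y, hz, rfl⟩

theorem exists_measurable_nat_coloring (hirr : ∀ x, ¬G x x) (hfin : ∀ x, {y | G x y}.Finite)
    (hnbr : ∀ B, MeasurableSet B → MeasurableSet {x | ∃ y ∈ B, G x y}) :
    ∃ c : I → ℕ, Measurable c ∧ ∀ x y, G x y → c x ≠ c y := by
  classical
  obtain ⟨U, hU, hsep⟩ := exists_measurableSet_nat_separating_finite (I := I)
  let Good : ℕ → Set I := fun n => U n \ {x | ∃ y ∈ U n, G x y}
  have hGood : ∀ x, ∃ n, x ∈ Good n := fun x => by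
    obtain ⟨n, hxn, hdisj⟩ := hsep x _ (hfin x) (hirr x)
    exact ⟨n, hxn, fun ⟨y, hyn, hxy⟩ => hdisj.notMem_of_mem_left hyn hxy⟩
  refine ⟨fun x => Nat.find (hGood x),
    measurable_find hGood fun n => (hU n).diff (hnbr _ (hU n)), fun x y hxy hc => ?_⟩
  have hx := Nat.find_spec (hGood x)
  have hy := Nat.find_spec (hGood y)
  simp only at hc
  rw [hc] at hx
  exact hx.2 ⟨y, hy.1, hxy⟩

end StandardBorel

section Greedy

variable {I : Type*} {G : I → I → Prop}

noncomputable def greedyColoring (G : I → I → Prop) (c₀ : I → ℕ) (x : I) : ℕ :=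
  sInf {k | ∀ y, G x y → c₀ y < c₀ x → greedyColoring G c₀ y ≠ k}
termination_by c₀ x

def lowerColors (G : I → I → Prop) (c₀ : I → ℕ) (x : I) : Set ℕ :=
  greedyColoring G c₀ '' {y | G x y ∧ c₀ y < c₀ x}

variable {c₀ : I → ℕ} {D : ℕ}

theorem greedyColoring_eq_sInf (x : I) :
    greedyColoring G c₀ x = sInf (lowerColors G c₀ x)ᶜ := by
  rw [greedyColoring]
  congr 1
  ext k
  simp [lowerColors]

variable (hfin : ∀ x, {y | G x y}.Finite) (hdeg : ∀ x, {y | G x y}.ncard ≤ D)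
include hfin hdeg

theorem exists_le_notMem_lowerColors (x : I) : ∃ k ≤ D, k ∉ lowerColors G c₀ x := by
  have hsub : {y | G x y ∧ c₀ y < c₀ x} ⊆ {y | G x y} := fun _ hy => hy.1
  have hcard : (lowerColors G c₀ x).ncard < (Iic D).ncard := by
    rw [ncard_Iic_nat, Nat.lt_succ_iff]
    exact (ncard_image_le ((hfin x).subset hsub)).trans
      ((ncard_le_ncard hsub (hfin x)).trans (hdeg x))
  exact exists_mem_notMem_of_ncard_lt_ncard hcard (((hfin x).subset hsub).image _)

theorem greedyColoring_le (x : I) : greedyColoring G c₀ x ≤ D := by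
  obtain ⟨k, hkD, hk⟩ := exists_le_notMem_lowerColors (c₀ := c₀) hfin hdeg x
  exact (greedyColoring_eq_sInf x ▸ Nat.sInf_le hk).trans hkD

theorem greedyColoring_eq_iff {x : I} {j : ℕ} : greedyColoring G c₀ x = j ↔
    j ∉ lowerColors G c₀ x ∧ ∀ i < j, i ∈ lowerColors G c₀ x := by
  obtain ⟨k, -, hk⟩ := exists_le_notMem_lowerColors (c₀ := c₀) hfin hdeg x
  rw [greedyColoring_eq_sInf x]
  constructor
  · rintro rfl
    exact ⟨Nat.sInf_mem (s := (lowerColors G c₀ x)ᶜ) ⟨k, hk⟩,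
      fun i hi => not_not.1 (Nat.notMem_of_lt_sInf hi)⟩
  · rintro ⟨hj, hlt⟩
    exact IsLeast.csInf_eq ⟨hj, fun i hi => not_lt.1 fun h => hi (hlt i h)⟩

theorem greedyColoring_ne_of_lt {x y : I} (hxy : G x y) (hlt : c₀ y < c₀ x) :
    greedyColoring G c₀ y ≠ greedyColoring G c₀ x :=
  fun h => ((greedyColoring_eq_iff hfin hdeg).1 rfl).1 ⟨y, ⟨hxy, hlt⟩, h⟩

theorem measurableSet_setOf_lt_and_greedyColoring_eq [MeasurableSpace I] (hc₀ : Measurable c₀)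
    (hnbr : ∀ B, MeasurableSet B → MeasurableSet {x | ∃ y ∈ B, G x y}) (n : ℕ) :
    ∀ j, MeasurableSet {y | c₀ y < n ∧ greedyColoring G c₀ y = j} := by
  induction n with
  | zero => simp
  | succ n ih =>
    intro j
    let nbr : ℕ → Set I := fun i =>
      {x | ∃ y ∈ {y | c₀ y < n ∧ greedyColoring G c₀ y = i}, G x y}
    have hnbr_iff : ∀ x, c₀ x = n → ∀ i, x ∈ nbr i ↔ i ∈ lowerColors G c₀ x := by
      rintro x rfl i
      simp only [nbr, lowerColors, mem_image, mem_ofPred_eq]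
      constructor <;> rintro ⟨y, h⟩ <;> exact ⟨y, by tauto⟩
    have key : {y | c₀ y < n + 1 ∧ greedyColoring G c₀ y = j} =
        {y | c₀ y < n ∧ greedyColoring G c₀ y = j} ∪
          (c₀ ⁻¹' {n} ∩ (nbr j)ᶜ ∩ ⋂ i < j, nbr i) := by
      ext x
      simp only [Nat.lt_succ_iff_lt_or_eq, or_and_right, mem_union, mem_ofPred_eq]
      refine or_congr Iff.rfl ⟨fun ⟨hn, hx⟩ => ?_, fun ⟨⟨hn, hj⟩, hi⟩ => ?_⟩
      · have := (greedyColoring_eq_iff hfin hdeg).1 hx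
        exact ⟨⟨hn, fun h => this.1 ((hnbr_iff x hn j).1 h)⟩,
          mem_iInter₂.2 fun i hi => (hnbr_iff x hn i).2 (this.2 i hi)⟩
      · exact ⟨hn, (greedyColoring_eq_iff hfin hdeg).2
          ⟨fun h => hj ((hnbr_iff x hn j).2 h),
            fun i hij => (hnbr_iff x hn i).1 (mem_iInter₂.1 hi i hij)⟩⟩
    rw [key]
    exact (ih j).union (((hc₀ (measurableSet_singleton n)).inter (hnbr _ (ih j)).compl).inter
      (.iInter fun i => .iInter fun _ => hnbr _ (ih i)))

theorem measurable_greedyColoring [MeasurableSpace I] (hc₀ : Measurable c₀)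
    (hnbr : ∀ B, MeasurableSet B → MeasurableSet {x | ∃ y ∈ B, G x y}) :
    Measurable (greedyColoring G c₀) := by
  refine measurable_to_countable' fun j => ?_
  have : greedyColoring G c₀ ⁻¹' {j} = ⋃ n, {y | c₀ y < n ∧ greedyColoring G c₀ y = j} := by
    ext y
    simp only [mem_preimage, mem_singleton_iff, mem_iUnion, mem_ofPred_eq]
    exact ⟨fun h => ⟨c₀ y + 1, Nat.lt_succ_self _, h⟩, fun ⟨_, _, h⟩ => h⟩
  rw [this]
  exact .iUnion fun n =>
    measurableSet_setOf_lt_and_greedyColoring_eq hfin hdeg hc₀ hnbr n j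

theorem exists_measurable_fin_coloring_of_nat_coloring [MeasurableSpace I]
    (hsym : ∀ x y, G x y → G y x)
    (hnbr : ∀ B, MeasurableSet B → MeasurableSet {x | ∃ y ∈ B, G x y})
    (hc₀ : Measurable c₀) (hc₀G : ∀ x y, G x y → c₀ x ≠ c₀ y) :
    ∃ c : I → Fin (D + 1), Measurable c ∧ ∀ x y, G x y → c x ≠ c y := by
  let c : I → Fin (D + 1) := fun x =>
    ⟨greedyColoring G c₀ x, Nat.lt_succ_of_le (greedyColoring_le hfin hdeg x)⟩
  refine ⟨c, measurable_to_countable' fun i => ?_, fun x y hxy hc => ?_⟩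
  · have : c ⁻¹' {i} = greedyColoring G c₀ ⁻¹' {i.val} := by
      ext x; simp [c, Fin.ext_iff]
    rw [this]
    exact measurable_greedyColoring hfin hdeg hc₀ hnbr (measurableSet_singleton _)
  have hg : greedyColoring G c₀ x = greedyColoring G c₀ y := congrArg Fin.val hc
  rcases (hc₀G x y hxy).lt_or_gt with hlt | hlt
  · exact greedyColoring_ne_of_lt hfin hdeg (hsym x y hxy) hlt hg
  · exact greedyColoring_ne_of_lt hfin hdeg hxy hlt hg.symm

end Greedy

/-- Kechris–Solecki–Todorcevic: every Borel graph with degrees at most `D`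
on a standard Borel space admits a Borel proper coloring with `D + 1` colors. -/
theorem stmt3 {I : Type*} [MeasurableSpace I] [StandardBorelSpace I] (D : ℕ)
    (G : I → I → Prop) (hsym : Symmetric G) (hirr : Irreflexive G)
    (hGmeas : MeasurableSet {p : I × I | G p.1 p.2})
    (hfin : ∀ x : I, {y | G x y}.Finite) (hdeg : ∀ x : I, {y | G x y}.ncard ≤ D) :
    ∃ c : I → Fin (D + 1), Measurable c ∧ ∀ x y : I, G x y → c x ≠ c y := by
  have hnbr : ∀ B, MeasurableSet B → MeasurableSet {x | ∃ y ∈ B, G x y} :=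
    fun _ hB => measurableSet_setOf_exists_adj hGmeas hfin hdeg hB
  obtain ⟨c₀, hc₀, hc₀G⟩ := exists_measurable_nat_coloring hirr hfin hnbr
  exact exists_measurable_fin_coloring_of_nat_coloring hfin hdeg (fun _ _ h => hsym h) hnbr
    hc₀ hc₀G
end

section
/- Every connected component of a compact graphing is either self-dense (every vertex of the component is a limit point of the other vertices of the component) or self-avoiding (every vertex of the component is at positive distance from the set of other vertices of the component). -/
open MeasureTheory

section Aux

variable {I : Type*} [MetricSpace I]

lemma aux_closure_diff {S F : Set I} (hF : F.Finite) {y : I}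
    (hy : y ∈ closure S) (hyS : y ∉ S) : y ∈ closure (S \ F) := by
  have h2 : S ⊆ (S \ F) ∪ (S ∩ F) := by
    intro w hw
    by_cases hwF : w ∈ F
    · exact Or.inr ⟨hw, hwF⟩
    · exact Or.inl ⟨hw, hwF⟩
  have h1 : closure S ⊆ closure (S \ F) ∪ (S ∩ F) := by
    calc closure S ⊆ closure ((S \ F) ∪ (S ∩ F)) := closure_mono h2
      _ = closure (S \ F) ∪ closure (S ∩ F) := closure_union
      _ = closure (S \ F) ∪ (S ∩ F) := by
          rw [(hF.inter_of_right S).isClosed.closure_eq]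
  rcases h1 hy with h | h
  · exact h
  · exact absurd h.1 hyS

lemma aux_step (G : I → I → Prop) (hsym : Symmetric G)
    (hfin : ∀ x : I, {y | G x y}.Finite)
    (hC3 : ∀ ε > (0:ℝ), ∀ r : ℕ, ∃ δ > (0:ℝ), ∀ x y : I, dist x y ≤ δ →
      ∃ φ : I → I, IsNbhdIso G r x y φ ∧ ∀ z ∈ gball G x r, dist z (φ z) ≤ ε)
    {y z : I} (hGyz : G y z)
    (hQ : y ∈ closure (compSet G y \ {y})) : z ∈ closure (compSet G z \ {z}) := by
  rw [Metric.mem_closure_iff]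
  intro ε hε
  obtain ⟨δ, hδ, hprop⟩ := hC3 (ε/2) (by linarith) 1
  have hyS : y ∉ compSet G y \ {y} := fun h => h.2 rfl
  have hcl := aux_closure_diff (hfin z) hQ hyS
  rw [Metric.mem_closure_iff] at hcl
  obtain ⟨y', hy', hdist⟩ := hcl δ hδ
  obtain ⟨φ, ⟨hφy, _, hadj⟩, hdisp⟩ := hprop y y' hdist.le
  have hyball : y ∈ gball G y 1 := by
    show y ∈ gball G y 0 ∪ _
    exact Or.inl rfl
  have hzball : z ∈ gball G y 1 := by
    show z ∈ gball G y 0 ∪ {w | ∃ v ∈ gball G y 0, G v w}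
    exact Or.inr ⟨y, rfl, hGyz⟩
  have hG' : G y' (φ z) := by
    have h := (hadj y hyball z hzball).mp hGyz
    rwa [hφy] at h
  have hne : φ z ≠ z := by
    intro h
    rw [h] at hG'
    exact hy'.2 (hsym hG')
  have hmem : φ z ∈ compSet G z := by
    have h1 : Relation.ReflTransGen G z y := Relation.ReflTransGen.single (hsym hGyz)
    have h2 : Relation.ReflTransGen G y y' := hy'.1.1
    exact Relation.ReflTransGen.tail (h1.trans h2) hG'
  refine ⟨φ z, ⟨hmem, hne⟩, ?_⟩
  calc dist z (φ z) ≤ ε/2 := hdisp z hzball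
    _ < ε := by linarith

lemma aux_inv (G : I → I → Prop) (hsym : Symmetric G)
    (hfin : ∀ x : I, {y | G x y}.Finite)
    (hC3 : ∀ ε > (0:ℝ), ∀ r : ℕ, ∃ δ > (0:ℝ), ∀ x y : I, dist x y ≤ δ →
      ∃ φ : I → I, IsNbhdIso G r x y φ ∧ ∀ z ∈ gball G x r, dist z (φ z) ≤ ε)
    {x y : I} (h : Relation.ReflTransGen G x y) :
    (x ∈ closure (compSet G x \ {x})) ↔ (y ∈ closure (compSet G y \ {y})) := by
  induction h with
  | refl => rfl
  | tail _ hbc ih =>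
      rw [ih]
      exact ⟨fun h => aux_step G hsym hfin hC3 hbc h,
             fun h => aux_step G hsym hfin hC3 (hsym hbc) h⟩

lemma aux_compSet_eq (G : I → I → Prop) (hsym : Symmetric G) {x y : I}
    (h : y ∈ compSet G x) : compSet G x = compSet G y := by
  have hs : Symmetric (Relation.ReflTransGen G) := by
    intro a b hab
    induction hab with
    | refl => exact Relation.ReflTransGen.refl
    | tail _ h2 ih => exact (Relation.ReflTransGen.single (hsym h2)).trans ih
  ext w
  constructor
  · intro hw
    exact Relation.ReflTransGen.trans (hs h) hw
  · intro hw
    exact Relation.ReflTransGen.trans h hw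

end Aux

/-- every component of a compact graphing is self-dense (each vertex is a
limit of the other vertices of the component) or self-avoiding (no vertex is). -/
theorem stmt14 {I : Type*} [MetricSpace I] [CompactSpace I] [MeasurableSpace I] [BorelSpace I]
    (G : I → I → Prop) (hsym : Symmetric G) (hirr : Irreflexive G)
    (D : ℕ) (hfin : ∀ x : I, {y | G x y}.Finite) (hdeg : ∀ x : I, {y | G x y}.ncard ≤ D)
    (hclosed : IsClosed {p : I × I | G p.1 p.2})
    (hC3 : ∀ ε > (0:ℝ), ∀ r : ℕ, ∃ δ > (0:ℝ), ∀ x y : I, dist x y ≤ δ →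
      ∃ φ : I → I, IsNbhdIso G r x y φ ∧ ∀ z ∈ gball G x r, dist z (φ z) ≤ ε)
    (μ : Measure I) [IsProbabilityMeasure μ]
    (hMP : ∀ A B : Set I, MeasurableSet A → MeasurableSet B →
      ∫ x in A, (degIn G B x : ℝ) ∂μ = ∫ x in B, (degIn G A x : ℝ) ∂μ) :
    ∀ x : I,
      (∀ y ∈ compSet G x, y ∈ closure (compSet G x \ {y})) ∨
      (∀ y ∈ compSet G x, y ∉ closure (compSet G x \ {y})) := by
  intro x
  by_cases hQ : x ∈ closure (compSet G x \ {x})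
  · left
    intro y hy
    rw [aux_compSet_eq G hsym hy]
    exact (aux_inv G hsym hfin hC3 hy).mp hQ
  · right
    intro y hy hcl
    rw [aux_compSet_eq G hsym hy] at hcl
    exact hQ ((aux_inv G hsym hfin hC3 hy).mpr hcl)
end
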